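/- arXiv:1511.05192 — 9 statements merged into one kernel-verified Lean document; each statement's English description precedes it below -/
import Mathlib

section
/- For all λ > 0, μ > 0, t > 0 and every sequence (a_m)_{m≥0} of real numbers with 0 ≤ a_m ≤ 1 for all m, one has Σ_{n=0}^∞ p(n; λt) · Σ_{m=0}^∞ p(m; μn) · a_m = e^{-λt(1-e^{-μ})} · Σ_{m=0}^∞ (μ^m/m!) B_m(λt e^{-μ}) a_m, where both double series converge. (Taking a_m = F_X^{(m)}(z), the m-fold convolution of a jump-distribution function evaluated at z, with a_0 = 1_{{z≥0}}, this gives the cumulative distribution function of a compound Poisson process subordinated by an independent Poisson process.) -/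
open scoped BigOperators
open Filter MeasureTheory

/-- Bell polynomial: `B n x = e^{-x} * Σ_{k=0}^∞ k^n x^k / k!` (n-th moment of Poisson(x)). -/
noncomputable def bell (n : ℕ) (x : ℝ) : ℝ :=
  Real.exp (-x) * ∑' k : ℕ, (k : ℝ) ^ n * x ^ k / (Nat.factorial k : ℝ)

/-- Poisson pmf `p(m;a) = e^{-a} a^m / m!` (with the convention `p(m;0) = 1_{m=0}`,
which holds automatically since `0^0 = 1`). -/
noncomputable def pois (a : ℝ) (m : ℕ) : ℝ := Real.exp (-a) * a ^ m / (Nat.factorial m : ℝ)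

lemma aux_pow_div_fact_le_exp {x : ℝ} (hx : 0 ≤ x) (n : ℕ) :
    x ^ n / (Nat.factorial n : ℝ) ≤ Real.exp x := by
  calc x ^ n / (Nat.factorial n : ℝ)
      ≤ ∑ i ∈ Finset.range (n + 1), x ^ i / (Nat.factorial i : ℝ) := by
        refine Finset.single_le_sum (f := fun i => x ^ i / (Nat.factorial i : ℝ)) ?_ ?_
        · intro i _; positivity
        · simp
    _ ≤ Real.exp x := Real.sum_le_exp_of_nonneg hx _

lemma aux_summable (n : ℕ) {x : ℝ} (hx : 0 ≤ x) :
    Summable (fun k : ℕ => (k : ℝ) ^ n * x ^ k / (Nat.factorial k : ℝ)) := by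
  refine Summable.of_nonneg_of_le (fun k => by positivity) (fun k => ?_)
    ((Real.summable_pow_div_factorial (Real.exp 1 * x)).mul_left (Nat.factorial n : ℝ))
  have h1 : (k : ℝ) ^ n ≤ (Nat.factorial n : ℝ) * Real.exp k := by
    have := aux_pow_div_fact_le_exp (x := (k : ℝ)) (Nat.cast_nonneg k) n
    have hfac : (0 : ℝ) < (Nat.factorial n : ℝ) := by positivity
    rw [div_le_iff₀ hfac] at this
    linarith
  have h2 : Real.exp (k : ℝ) = Real.exp 1 ^ k := by
    rw [← Real.exp_nat_mul]; ring_nf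
  calc (k : ℝ) ^ n * x ^ k / (Nat.factorial k : ℝ)
      ≤ ((Nat.factorial n : ℝ) * Real.exp 1 ^ k) * x ^ k / (Nat.factorial k : ℝ) := by
        apply div_le_div_of_nonneg_right ?_ ?_ |>.trans_eq rfl
        · exact mul_le_mul_of_nonneg_right (h2 ▸ h1) (by positivity)
        · positivity
    _ = (Nat.factorial n : ℝ) * ((Real.exp 1 * x) ^ k / (Nat.factorial k : ℝ)) := by
        rw [mul_pow]; ring

lemma aux_tsum_exp (x : ℝ) : ∑' k : ℕ, x ^ k / (Nat.factorial k : ℝ) = Real.exp x := by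
  rw [Real.exp_eq_exp_ℝ, NormedSpace.exp_eq_tsum_div]

lemma pois_nonneg {A : ℝ} (hA : 0 ≤ A) (m : ℕ) : 0 ≤ pois A m := by
  unfold pois; positivity

lemma pois_summable (A : ℝ) : Summable (pois A) := by
  have : pois A = fun m => Real.exp (-A) * (A ^ m / (Nat.factorial m : ℝ)) := by
    funext m; unfold pois; ring
  rw [this]
  exact (Real.summable_pow_div_factorial A).mul_left _

lemma pois_tsum {A : ℝ} : ∑' m : ℕ, pois A m = 1 := by
  have : (fun m : ℕ => pois A m) = fun m => Real.exp (-A) * (A ^ m / (Nat.factorial m : ℝ)) := by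
    funext m; unfold pois; ring
  rw [this, tsum_mul_left, aux_tsum_exp, ← Real.exp_add]
  simp

set_option maxHeartbeats 1000000 in
/-- Poisson mixture identity for the CDF of a compound Poisson process
with a Poisson subordinator, in terms of Bell polynomials. -/
theorem stmt0 (lam mu t : ℝ) (hlam : 0 < lam) (hmu : 0 < mu) (ht : 0 < t)
    (a : ℕ → ℝ) (ha : ∀ m, 0 ≤ a m ∧ a m ≤ 1) :
    (∀ n : ℕ, Summable (fun m : ℕ => pois (mu * n) m * a m)) ∧
    Summable (fun n : ℕ => pois (lam * t) n * ∑' m : ℕ, pois (mu * n) m * a m) ∧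
    Summable (fun m : ℕ =>
      mu ^ m / (Nat.factorial m : ℝ) * bell m (lam * t * Real.exp (-mu)) * a m) ∧
    (∑' n : ℕ, pois (lam * t) n * ∑' m : ℕ, pois (mu * n) m * a m)
      = Real.exp (-lam * t * (1 - Real.exp (-mu))) *
        ∑' m : ℕ, mu ^ m / (Nat.factorial m : ℝ) * bell m (lam * t * Real.exp (-mu)) * a m := by
  set L : ℝ := lam * t with hLdef
  set c : ℝ := L * Real.exp (-mu) with hcdef
  have hL0 : 0 < L := mul_pos hlam ht
  have hc0 : 0 < c := mul_pos hL0 (Real.exp_pos _)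
  -- fiber summability (conjunct 1)
  have h1 : ∀ n : ℕ, Summable (fun m : ℕ => pois (mu * n) m * a m) := by
    intro n
    have hA : (0:ℝ) ≤ mu * n := by positivity
    refine Summable.of_nonneg_of_le (fun m => mul_nonneg (pois_nonneg hA m) (ha m).1)
      (fun m => ?_) (pois_summable (mu * n))
    calc pois (mu * n) m * a m ≤ pois (mu * n) m * 1 :=
          mul_le_mul_of_nonneg_left (ha m).2 (pois_nonneg hA m)
      _ = pois (mu * n) m := mul_one _
  -- the double family
  set L : ℝ := lam * t with hLdef
  set c : ℝ := L * Real.exp (-mu) with hcdef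
  have hL0 : 0 < L := mul_pos hlam ht
  have hc0 : 0 < c := mul_pos hL0 (Real.exp_pos _)
  -- conjunct 1
  have h1 : ∀ n : ℕ, Summable (fun m : ℕ => pois (mu * n) m * a m) := by
    intro n
    have hA : (0:ℝ) ≤ mu * n := by positivity
    refine Summable.of_nonneg_of_le (fun m => mul_nonneg (pois_nonneg hA m) (ha m).1)
      (fun m => ?_) (pois_summable (mu * n))
    calc pois (mu * n) m * a m ≤ pois (mu * n) m * 1 :=
          mul_le_mul_of_nonneg_left (ha m).2 (pois_nonneg hA m)
      _ = pois (mu * n) m := mul_one _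
  have hSle : ∀ n : ℕ, (∑' m : ℕ, pois (mu * n) m * a m) ≤ 1 := by
    intro n
    have hA : (0:ℝ) ≤ mu * n := by positivity
    calc (∑' m : ℕ, pois (mu * n) m * a m) ≤ ∑' m : ℕ, pois (mu * n) m := by
          refine Summable.tsum_le_tsum (fun m => ?_) (h1 n) (pois_summable _)
          calc pois (mu * n) m * a m ≤ pois (mu * n) m * 1 :=
                mul_le_mul_of_nonneg_left (ha m).2 (pois_nonneg hA m)
            _ = pois (mu * n) m := mul_one _
      _ = 1 := pois_tsum
  have hSnn : ∀ n : ℕ, 0 ≤ ∑' m : ℕ, pois (mu * n) m * a m := fun n =>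
    tsum_nonneg fun m => mul_nonneg (pois_nonneg (by positivity) m) (ha m).1
  -- conjunct 2
  have h2 : Summable (fun n : ℕ => pois L n * ∑' m : ℕ, pois (mu * n) m * a m) := by
    refine Summable.of_nonneg_of_le
      (fun n => mul_nonneg (pois_nonneg hL0.le n) (hSnn n)) (fun n => ?_) (pois_summable L)
    calc pois L n * ∑' m : ℕ, pois (mu * n) m * a m ≤ pois L n * 1 :=
          mul_le_mul_of_nonneg_left (hSle n) (pois_nonneg hL0.le n)
      _ = pois L n := mul_one _
  -- the double family
  set F : ℕ × ℕ → ℝ := fun p => pois L p.1 * (pois (mu * p.1) p.2 * a p.2) with hFdef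
  have hkey : ∀ n m : ℕ, F (n, m)
      = Real.exp (-L) * (mu ^ m / (Nat.factorial m : ℝ) * a m)
        * ((n : ℝ) ^ m * c ^ n / (Nat.factorial n : ℝ)) := by
    intro n m
    have he : Real.exp (-(mu * n)) = Real.exp (-mu) ^ n := by
      rw [← Real.exp_nat_mul]; ring_nf
    simp only [hFdef, pois, hcdef]
    rw [he, mul_pow mu (n:ℝ) m, mul_pow L (Real.exp (-mu)) n]
    ring
  have hFnn : 0 ≤ F := fun p =>
    mul_nonneg (pois_nonneg hL0.le _) (mul_nonneg (pois_nonneg (by positivity) _) (ha _).1)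
  have hF : Summable F := by
    rw [summable_prod_of_nonneg hFnn]
    constructor
    · intro n; simp only [hFdef]; exact (h1 n).mul_left _
    · have heq : (fun n : ℕ => ∑' m : ℕ, F (n, m))
          = fun n : ℕ => pois L n * ∑' m : ℕ, pois (mu * n) m * a m := by
        funext n; simp only [hFdef]; exact tsum_mul_left
      rw [heq]; exact h2
  have hFswap : Summable (fun p : ℕ × ℕ => F p.swap) := hF.prod_symm
  have hmarg : Summable (fun m : ℕ => ∑' n : ℕ, F (n, m)) :=
    ((summable_prod_of_nonneg (fun p => hFnn p.swap)).mp hFswap).2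
  -- inner sum over n for fixed m
  have hinner : ∀ m : ℕ, (∑' n : ℕ, F (n, m))
      = Real.exp (-L) * Real.exp c
        * (mu ^ m / (Nat.factorial m : ℝ) * bell m c * a m) := by
    intro m
    have heq : (fun n : ℕ => F (n, m))
        = fun n : ℕ => (Real.exp (-L) * (mu ^ m / (Nat.factorial m : ℝ) * a m))
            * ((n : ℝ) ^ m * c ^ n / (Nat.factorial n : ℝ)) := by
      funext n; exact hkey n m
    rw [heq, tsum_mul_left]
    have hbell : (∑' n : ℕ, (n : ℝ) ^ m * c ^ n / (Nat.factorial n : ℝ))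
        = Real.exp c * bell m c := by
      rw [bell, ← mul_assoc, ← Real.exp_add]; simp
    rw [hbell]; ring
  have hE : Real.exp (L - c) * (Real.exp (-L) * Real.exp c) = 1 := by
    rw [← Real.exp_add, ← Real.exp_add]; norm_num
  -- conjunct 3
  have h3 : Summable (fun m : ℕ =>
      mu ^ m / (Nat.factorial m : ℝ) * bell m c * a m) := by
    have heq : (fun m : ℕ => mu ^ m / (Nat.factorial m : ℝ) * bell m c * a m)
        = fun m : ℕ => Real.exp (L - c) * ∑' n : ℕ, F (n, m) := by
      funext m
      rw [hinner m, ← mul_assoc, hE, one_mul]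
    rw [heq]
    exact hmarg.mul_left _
  refine ⟨h1, h2, h3, ?_⟩
  -- final equality
  have step1 : (∑' n : ℕ, pois L n * ∑' m : ℕ, pois (mu * n) m * a m)
      = ∑' n : ℕ, ∑' m : ℕ, F (n, m) :=
    tsum_congr fun n => tsum_mul_left.symm
  have step2 : (∑' n : ℕ, ∑' m : ℕ, F (n, m)) = ∑' p : ℕ × ℕ, F p := (Summable.tsum_prod' hF (fun n => by simp only [hFdef]; exact (h1 n).mul_left _)).symm
  have step3 : (∑' p : ℕ × ℕ, F p) = ∑' m : ℕ, ∑' n : ℕ, F (n, m) := by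
    rw [← (Equiv.prodComm ℕ ℕ).tsum_eq F]
    exact Summable.tsum_prod' hFswap fun m =>
      ((summable_prod_of_nonneg (fun p => hFnn p.swap)).mp hFswap).1 m
  rw [step1, step2, step3, tsum_congr hinner, tsum_mul_left, ← Real.exp_add]
  congr 2
  rw [hcdef, hLdef]; ring
end

section
/- For all λ > 0, μ > 0, all 0 < s < t, and every integer n ≥ 0, the probability mass function of the iterated Poisson process satisfies the Chapman–Kolmogorov convolution identity p_n(t) = Σ_{j=0}^n p_j(s) · p_{n-j}(t - s). -/
open scoped BigOperators
open Filter MeasureTheory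

/-- pmf of the iterated Poisson process:
`p_m(t) = e^{-λt(1-e^{-μ})} (μ^m/m!) B_m(λ t e^{-μ})`. -/
noncomputable def iterP (lam mu t : ℝ) (m : ℕ) : ℝ :=
  Real.exp (-lam * t * (1 - Real.exp (-mu))) * (mu ^ m / (Nat.factorial m : ℝ)) *
    bell m (lam * t * Real.exp (-mu))

/-!
Writing `B_n(x) = e^{-x} Σ_k k^n x^k / k!`, the Cauchy product of the series for `B_j(x)` and
`B_{n-j}(y)`, summed against `(n choose j)`, collapses termwise by the binomial theorem, first in
`(k + l)^n` and then in `(x + y)^m`, to the series for `B_n(x + y)`. This binomial identity for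
Bell (Touchard) polynomials, applied at `x = λ s e^{-μ}` and `y = λ (t - s) e^{-μ}`, together
with `e^{-λt c} = e^{-λs c} e^{-λ(t-s) c}`, is the Chapman–Kolmogorov identity.
-/

open Finset
open scoped Nat

noncomputable def bellSummand (n : ℕ) (x : ℝ) (k : ℕ) : ℝ := (k : ℝ) ^ n * x ^ k / k !

lemma bell_eq_tsum_bellSummand (n : ℕ) (x : ℝ) :
    bell n x = Real.exp (-x) * ∑' k, bellSummand n x k := rfl

/-- `k ^ n ≤ n! e^k` reduces the series to that of `n! e^{e |x|}`. -/
lemma summable_norm_bellSummand (n : ℕ) (x : ℝ) :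
    Summable fun k => ‖bellSummand n x k‖ := by
  refine Summable.of_nonneg_of_le (fun _ => norm_nonneg _) (fun k => ?_)
    ((Real.summable_pow_div_factorial (Real.exp 1 * |x|)).mul_left (n ! : ℝ))
  have hpow : (k : ℝ) ^ n ≤ n ! * Real.exp 1 ^ k := by
    have := Real.pow_div_factorial_le_exp (k : ℝ) (Nat.cast_nonneg k) n
    rw [div_le_iff₀ (by positivity)] at this
    rw [Real.exp_one_pow]
    linarith
  calc ‖bellSummand n x k‖ = (k : ℝ) ^ n * |x| ^ k / k ! := by
        simp [bellSummand]
    _ ≤ n ! * Real.exp 1 ^ k * |x| ^ k / k ! := by gcongr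
    _ = n ! * ((Real.exp 1 * |x|) ^ k / k !) := by ring

lemma sum_antidiagonal_pow_div_factorial {K : Type*} [Field K] [CharZero K] (m : ℕ) (x y : K) :
    ∑ kl ∈ antidiagonal m, x ^ kl.1 / kl.1 ! * (y ^ kl.2 / kl.2 !) = (x + y) ^ m / m ! := by
  rw [(Commute.all x y).add_pow', sum_div]
  refine sum_congr rfl fun ⟨k, l⟩ hkl => ?_
  rw [← HasAntidiagonal.mem_antidiagonal.mp hkl, nsmul_eq_mul, Nat.cast_add_choose]
  have : ((k + l)! : K) ≠ 0 := Nat.cast_ne_zero.mpr (k + l).factorial_ne_zero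
  field_simp

lemma sum_choose_mul_sum_antidiagonal_bellSummand (n m : ℕ) (x y : ℝ) :
    ∑ j ∈ range (n + 1), (n.choose j : ℝ) *
        ∑ kl ∈ antidiagonal m, bellSummand j x kl.1 * bellSummand (n - j) y kl.2 =
      bellSummand n (x + y) m := by
  have hbinom : ∀ kl ∈ antidiagonal m,
      ∑ j ∈ range (n + 1), (n.choose j : ℝ) * (bellSummand j x kl.1 * bellSummand (n - j) y kl.2) =
        (m : ℝ) ^ n * (x ^ kl.1 / kl.1 ! * (y ^ kl.2 / kl.2 !)) := by
    intro kl hkl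
    rw [← HasAntidiagonal.mem_antidiagonal.mp hkl, Nat.cast_add, add_pow, sum_mul]
    refine sum_congr rfl fun j _ => ?_
    simp only [bellSummand]
    ring
  simp_rw [mul_sum]
  rw [sum_comm, sum_congr rfl hbinom, ← mul_sum, sum_antidiagonal_pow_div_factorial, bellSummand,
    mul_div_assoc]

lemma tsum_bellSummand_add (n : ℕ) (x y : ℝ) :
    ∑' k, bellSummand n (x + y) k =
      ∑ j ∈ range (n + 1), (n.choose j : ℝ) *
        ((∑' k, bellSummand j x k) * ∑' k, bellSummand (n - j) y k) := by
  have hcauchy : ∀ j, (∑' k, bellSummand j x k) * ∑' k, bellSummand (n - j) y k =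
      ∑' m, ∑ kl ∈ antidiagonal m, bellSummand j x kl.1 * bellSummand (n - j) y kl.2 := fun j =>
    tsum_mul_tsum_eq_tsum_sum_antidiagonal_of_summable_norm
      (summable_norm_bellSummand j x) (summable_norm_bellSummand (n - j) y)
  have hsummable : ∀ j ∈ range (n + 1), Summable fun m => (n.choose j : ℝ) *
      ∑ kl ∈ antidiagonal m, bellSummand j x kl.1 * bellSummand (n - j) y kl.2 := fun j _ =>
    ((summable_norm_sum_mul_antidiagonal_of_summable_norm
      (summable_norm_bellSummand j x) (summable_norm_bellSummand (n - j) y)).of_norm).mul_left _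
  simp_rw [hcauchy, ← tsum_mul_left]
  rw [← Summable.tsum_finsetSum hsummable]
  exact tsum_congr fun m => (sum_choose_mul_sum_antidiagonal_bellSummand n m x y).symm

theorem bell_add (n : ℕ) (x y : ℝ) :
    bell n (x + y) = ∑ j ∈ range (n + 1), (n.choose j : ℝ) * bell j x * bell (n - j) y := by
  simp_rw [bell_eq_tsum_bellSummand, tsum_bellSummand_add, mul_sum, neg_add, Real.exp_add]
  refine sum_congr rfl fun j _ => ?_
  ring

theorem iterP_add (lam mu s u : ℝ) (n : ℕ) :
    iterP lam mu (s + u) n =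
      ∑ j ∈ range (n + 1), iterP lam mu s j * iterP lam mu u (n - j) := by
  have hexp : Real.exp (-lam * (s + u) * (1 - Real.exp (-mu))) =
      Real.exp (-lam * s * (1 - Real.exp (-mu))) * Real.exp (-lam * u * (1 - Real.exp (-mu))) := by
    rw [← Real.exp_add]; ring_nf
  simp only [iterP]
  rw [hexp, mul_add, add_mul, bell_add, mul_sum]
  refine sum_congr rfl fun j hj => ?_
  have hjn : j ≤ n := Nat.lt_succ_iff.mp (mem_range.mp hj)
  rw [Nat.cast_choose ℝ hjn, ← Nat.add_sub_cancel' hjn, pow_add, Nat.add_sub_cancel_left]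
  field_simp

theorem stmt4_general (lam mu : ℝ) (s t : ℝ) (n : ℕ) :
    iterP lam mu t n = ∑ j ∈ Finset.range (n + 1), iterP lam mu s j * iterP lam mu (t - s) (n - j) := by
  simpa using iterP_add lam mu s (t - s) n

/-- Chapman–Kolmogorov convolution identity
`p_n(t) = Σ_{j=0}^n p_j(s) p_{n-j}(t-s)` for `0 < s < t`. -/
theorem stmt4 (lam mu : ℝ) (hlam : 0 < lam) (hmu : 0 < mu)
    (s t : ℝ) (hs : 0 < s) (hst : s < t) (n : ℕ) :
    iterP lam mu t n = ∑ j ∈ Finset.range (n + 1), iterP lam mu s j * iterP lam mu (t - s) (n - j) :=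
  stmt4_general lam mu s t n
end

section
/- For all λ > 0, μ > 0, t > 0 and every integer m ≥ 0, the Poisson mixture of Poisson probabilities satisfies Σ_{n=0}^∞ e^{-λt} ((λt)^n/n!) · e^{-μn} ((μn)^m/m!) = e^{-λt(1-e^{-μ})} (μ^m/m!) B_m(λt e^{-μ}); that is, the probability that an iterated Poisson process (a Poisson process of rate μ evaluated at an independent Poisson process of rate λ) equals m at time t is p_m(t) = e^{-λt(1-e^{-μ})} (μ^m/m!) B_m(λt e^{-μ}). -/
open scoped BigOperators
open Filter MeasureTheory

/-- Poisson mixture of Poisson probabilities: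
`Σ_n e^{-λt}(λt)^n/n! · e^{-μn}(μn)^m/m! = e^{-λt(1-e^{-μ})}(μ^m/m!) B_m(λ t e^{-μ})`. -/
theorem stmt5 (lam mu t : ℝ) (hlam : 0 < lam) (hmu : 0 < mu) (ht : 0 < t) (m : ℕ) :
    ∑' n : ℕ, (Real.exp (-(lam * t)) * (lam * t) ^ n / (Nat.factorial n : ℝ)) *
        (Real.exp (-(mu * n)) * (mu * n) ^ m / (Nat.factorial m : ℝ))
      = iterP lam mu t m := by
  have hterm : ∀ n : ℕ,
      (Real.exp (-(lam * t)) * (lam * t) ^ n / (Nat.factorial n : ℝ)) *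
        (Real.exp (-(mu * n)) * (mu * n) ^ m / (Nat.factorial m : ℝ))
      = (Real.exp (-(lam * t)) * mu ^ m / (Nat.factorial m : ℝ)) *
          ((n : ℝ) ^ m * (lam * t * Real.exp (-mu)) ^ n / (Nat.factorial n : ℝ)) := by
    intro n
    have h1 : Real.exp (-(mu * n)) = (Real.exp (-mu)) ^ n := by
      rw [← Real.exp_nat_mul]; ring_nf
    rw [h1, mul_pow, mul_pow]
    ring
  rw [tsum_congr hterm, tsum_mul_left]
  unfold iterP bell
  have key : Real.exp (-lam * t * (1 - Real.exp (-mu))) * Real.exp (-(lam * t * Real.exp (-mu)))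
      = Real.exp (-(lam * t)) := by
    rw [← Real.exp_add]; ring_nf
  rw [← key]; ring
end

section
/- For all λ > 0, μ > 0, t > 0 and every integer n ≥ 1, the iterated Poisson probabilities satisfy the recurrence p_n(t) = (1/n) λ e^{-μ} t · Σ_{k=1}^n (μ^{n-k+1}/(n-k)!) p_{k-1}(t). -/
open scoped BigOperators
open Filter MeasureTheory

/-!
Writing `p_m = e^{-λt(1-e^{-μ})} (μ^m/m!) B_m(y)` with `y = λ t e^{-μ}`, the recurrence is the
Bell recurrence `B_{m+1}(y) = y Σ_{j ≤ m} C(m, j) B_j(y)` multiplied by `μ^{m+1}/(m+1)!`. The Bell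
recurrence itself comes from shifting the series index: `(k+1)^{m+1}/(k+1)! = (k+1)^m/k!`, and
`(k+1)^m` is expanded by the binomial theorem.
-/

open Nat

lemma natCast_pow_le_factorial_mul_exp_one_pow (k n : ℕ) :
    (k : ℝ) ^ n ≤ n ! * Real.exp 1 ^ k := by
  have h := Real.pow_div_factorial_le_exp (k : ℝ) (Nat.cast_nonneg k) n
  rw [div_le_iff₀ (by positivity), ← Real.exp_one_pow] at h
  linarith

lemma summable_natCast_pow_mul_pow_div_factorial (n : ℕ) (x : ℝ) :
    Summable (fun k : ℕ => (k : ℝ) ^ n * x ^ k / k !) := by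
  refine Summable.of_norm_bounded
    ((Real.summable_pow_div_factorial (Real.exp 1 * |x|)).mul_left (n ! : ℝ)) fun k => ?_
  calc ‖(k : ℝ) ^ n * x ^ k / (k ! : ℝ)‖ = (k : ℝ) ^ n * |x| ^ k / k ! := by
        rw [Real.norm_eq_abs, abs_div, abs_mul, abs_pow, abs_pow, Nat.abs_cast, Nat.abs_cast]
    _ ≤ (n ! * Real.exp 1 ^ k) * |x| ^ k / k ! := by
        gcongr
        exact natCast_pow_le_factorial_mul_exp_one_pow k n
    _ = n ! * ((Real.exp 1 * |x|) ^ k / k !) := by ring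

lemma natCast_succ_pow_succ_mul_pow_succ_div_factorial_succ (m k : ℕ) (x : ℝ) :
    ((k + 1 : ℕ) : ℝ) ^ (m + 1) * x ^ (k + 1) / (k + 1)! =
      ∑ j ∈ Finset.range (m + 1), x * m.choose j * ((k : ℝ) ^ j * x ^ k / k !) := by
  have hbinom : ∑ j ∈ Finset.range (m + 1), (k : ℝ) ^ j * m.choose j = ((k : ℝ) + 1) ^ m := by
    simpa using (add_pow (k : ℝ) 1 m).symm
  calc ((k + 1 : ℕ) : ℝ) ^ (m + 1) * x ^ (k + 1) / (k + 1)!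
      = x * x ^ k / k ! * ((k : ℝ) + 1) ^ m := by
        rw [Nat.factorial_succ]
        push_cast
        field_simp
        ring
    _ = ∑ j ∈ Finset.range (m + 1), x * m.choose j * ((k : ℝ) ^ j * x ^ k / k !) := by
        rw [← hbinom, Finset.mul_sum]
        exact Finset.sum_congr rfl fun j _ => by ring

lemma tsum_natCast_pow_succ_mul_pow_div_factorial (m : ℕ) (x : ℝ) :
    ∑' k : ℕ, (k : ℝ) ^ (m + 1) * x ^ k / (Nat.factorial k : ℝ) =
      x * ∑ j ∈ Finset.range (m + 1),
        (m.choose j : ℝ) * ∑' k : ℕ, (k : ℝ) ^ j * x ^ k / (Nat.factorial k : ℝ) := by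
  rw [(summable_natCast_pow_mul_pow_div_factorial (m + 1) x).tsum_eq_zero_add]
  simp only [Nat.cast_zero, zero_pow m.succ_ne_zero, zero_mul, zero_div, zero_add,
    natCast_succ_pow_succ_mul_pow_succ_div_factorial_succ]
  rw [Summable.tsum_finsetSum fun j _ =>
    (summable_natCast_pow_mul_pow_div_factorial j x).mul_left _, Finset.mul_sum]
  refine Finset.sum_congr rfl fun j _ => ?_
  rw [tsum_mul_left, mul_assoc]

lemma bell_succ_eq_mul_sum (m : ℕ) (x : ℝ) :
    bell (m + 1) x = x * ∑ j ∈ Finset.range (m + 1), (m.choose j : ℝ) * bell j x := by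
  simp only [bell, tsum_natCast_pow_succ_mul_pow_div_factorial, Finset.mul_sum]
  refine Finset.sum_congr rfl fun j _ => ?_
  ring

lemma pow_succ_div_factorial_succ_mul_choose {m j : ℕ} (hj : j ≤ m) (μ : ℝ) :
    μ ^ (m + 1) / (m + 1)! * m.choose j =
      1 / (m + 1 : ℕ) * (μ ^ (m - j + 1) / (m - j)!) * (μ ^ j / j !) := by
  have hfact : (m.choose j : ℝ) * j ! * (m - j)! = m ! := by
    exact_mod_cast Nat.choose_mul_factorial_mul_factorial hj
  have hchoose : (m.choose j : ℝ) ≠ 0 := by exact_mod_cast (Nat.choose_pos hj).ne'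
  have hpow : μ ^ (m + 1) = μ ^ (m - j + 1) * μ ^ j := by
    rw [← pow_add]; congr 1; omega
  rw [hpow, Nat.factorial_succ, Nat.cast_mul, ← hfact]
  field_simp

theorem stmt7_general (lam mu t : ℝ) (n : ℕ) (hn : 1 ≤ n) :
    iterP lam mu t n = (1 / n) * lam * Real.exp (-mu) * t *
      ∑ k ∈ Finset.Icc 1 n, mu ^ (n - k + 1) / (Nat.factorial (n - k) : ℝ) * iterP lam mu t (k - 1) := by
  obtain ⟨m, rfl⟩ := Nat.exists_eq_add_of_le' hn
  have hreindex : ∑ k ∈ Finset.Icc 1 (m + 1),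
      mu ^ (m + 1 - k + 1) / (Nat.factorial (m + 1 - k) : ℝ) * iterP lam mu t (k - 1) =
        ∑ j ∈ Finset.range (m + 1),
          mu ^ (m - j + 1) / (Nat.factorial (m - j) : ℝ) * iterP lam mu t j := by
    rw [← Finset.Ico_add_one_right_eq_Icc, Finset.sum_Ico_eq_sum_range]
    refine Finset.sum_congr rfl fun j _ => ?_
    rw [add_tsub_cancel_left, show m + 1 - (1 + j) = m - j by omega]
  rw [hreindex]
  simp only [iterP, bell_succ_eq_mul_sum, Finset.mul_sum]
  refine Finset.sum_congr rfl fun j hj => ?_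
  have hcoeff := pow_succ_div_factorial_succ_mul_choose
    (Nat.lt_succ_iff.mp (Finset.mem_range.mp hj)) mu
  linear_combination (Real.exp (-lam * t * (1 - Real.exp (-mu))) * (lam * t * Real.exp (-mu)) *
    bell j (lam * t * Real.exp (-mu))) * hcoeff

/-- recurrence
`p_n(t) = (1/n) λ e^{-μ} t Σ_{k=1}^n (μ^{n-k+1}/(n-k)!) p_{k-1}(t)` for `n ≥ 1`. -/
theorem stmt7 (lam mu t : ℝ) (hlam : 0 < lam) (hmu : 0 < mu) (ht : 0 < t) (n : ℕ) (hn : 1 ≤ n) :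
    iterP lam mu t n = (1 / n) * lam * Real.exp (-mu) * t *
      ∑ k ∈ Finset.Icc 1 n, mu ^ (n - k + 1) / (Nat.factorial (n - k) : ℝ) * iterP lam mu t (k - 1) :=
  stmt7_general lam mu t n hn
end

section
/- For all λ > 0, μ > 0, all 0 < s < t, and all integers 0 ≤ k ≤ n, the conditional probability of the iterated Poisson process satisfies p_k(s) p_{n-k}(t-s) / p_n(t) = C(n,k) · B_k(λ e^{-μ} s) B_{n-k}(λ e^{-μ}(t-s)) / B_n(λ e^{-μ} t), where C(n,k) is the binomial coefficient (note that B_n(λ e^{-μ} t) > 0). -/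
open scoped BigOperators
open Filter MeasureTheory

/-! The ratio is pure algebra once the exponential prefactors, which multiply like
`e^{-as} e^{-a(t-s)} = e^{-at}`, have cancelled, and `μ^k μ^{n-k} / μ^n = 1`,
`n! / (k! (n-k)!) = C(n,k)`. The only analytic input is `B_n(x) > 0` for `x > 0`, which holds
because the series defining it has nonnegative terms and a positive term at index `1`. -/

open Nat in
lemma summable_pow_mul_pow_div_factorial (n : ℕ) (x : ℝ) :
    Summable fun k : ℕ => (k : ℝ) ^ n * x ^ k / (k ! : ℝ) := by
  refine Summable.of_norm_bounded
    ((Real.summable_pow_div_factorial (Real.exp 1 * |x|)).mul_left (n ! : ℝ)) fun k => ?_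
  have hpow : (k : ℝ) ^ n ≤ n ! * Real.exp 1 ^ k := by
    have := Real.pow_div_factorial_le_exp (x := (k : ℝ)) k.cast_nonneg n
    rw [div_le_iff₀ (by positivity), ← Real.exp_one_pow] at this
    linarith
  calc ‖(k : ℝ) ^ n * x ^ k / (k ! : ℝ)‖ = (k : ℝ) ^ n * |x| ^ k / k ! := by
        rw [Real.norm_eq_abs, abs_div, abs_mul, abs_pow, abs_pow, Nat.abs_cast, Nat.abs_cast]
    _ ≤ n ! * Real.exp 1 ^ k * |x| ^ k / k ! := by gcongr
    _ = n ! * ((Real.exp 1 * |x|) ^ k / k !) := by ring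

lemma bell_pos (n : ℕ) {x : ℝ} (hx : 0 < x) : 0 < bell n x :=
  mul_pos (Real.exp_pos _) <|
    (summable_pow_mul_pow_div_factorial n x).tsum_pos (fun k => by positivity) 1 (by simp [hx])

-- If `bell n (lam * t * exp (-mu)) = 0`, both sides are `0` because `x / 0 = 0`.
lemma iterP_mul_iterP_div_iterP (lam : ℝ) {mu : ℝ} (hmu : mu ≠ 0) (s t : ℝ) {n k : ℕ}
    (hk : k ≤ n) :
    iterP lam mu s k * iterP lam mu (t - s) (n - k) / iterP lam mu t n
      = n.choose k * (bell k (lam * s * Real.exp (-mu)) *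
          bell (n - k) (lam * (t - s) * Real.exp (-mu))) / bell n (lam * t * Real.exp (-mu)) := by
  have hexp : Real.exp (-lam * s * (1 - Real.exp (-mu))) *
      Real.exp (-lam * (t - s) * (1 - Real.exp (-mu))) =
      Real.exp (-lam * t * (1 - Real.exp (-mu))) := by
    rw [← Real.exp_add]; ring_nf
  have hchoose : (n.choose k : ℝ) * k.factorial * (n - k).factorial = n.factorial := by
    exact_mod_cast Nat.choose_mul_factorial_mul_factorial hk
  have hmun : mu ^ k * mu ^ (n - k) = mu ^ n := by
    rw [← pow_add, Nat.add_sub_cancel' hk]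
  unfold iterP
  rw [← hexp, ← hchoose, ← hmun]
  field_simp

/-- conditional probability of the iterated Poisson process:
`p_k(s) p_{n-k}(t-s)/p_n(t) = C(n,k) B_k(λe^{-μ}s) B_{n-k}(λe^{-μ}(t-s)) / B_n(λe^{-μ}t)`,
with `B_n(λe^{-μ}t) > 0`. -/
theorem stmt8 (lam mu : ℝ) (hlam : 0 < lam) (hmu : 0 < mu)
    (s t : ℝ) (hs : 0 < s) (hst : s < t) (n k : ℕ) (hk : k ≤ n) :
    0 < bell n (lam * Real.exp (-mu) * t) ∧
    iterP lam mu s k * iterP lam mu (t - s) (n - k) / iterP lam mu t n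
      = (Nat.choose n k : ℝ) *
          (bell k (lam * Real.exp (-mu) * s) * bell (n - k) (lam * Real.exp (-mu) * (t - s)))
          / bell n (lam * Real.exp (-mu) * t) := by
  have ht : 0 < t := hs.trans hst
  refine ⟨bell_pos n (by positivity), ?_⟩
  simpa only [mul_right_comm lam] using iterP_mul_iterP_div_iterP lam hmu.ne' s t hk
end

section
/- For all λ > 0, μ > 0 and t > 0, the mean of the iterated Poisson process equals Σ_{n=0}^∞ n · p_n(t) = λ μ t. -/
open scoped BigOperators
open Filter MeasureTheory

/-!
Expanding the Bell polynomial, `Σ_m m (a^m/m!) B_m(b)` is `e^{-b}` times the double series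
`Σ_m Σ_k m a^m/m! · k^m b^k/k!`. Summing over `m` first gives `b^k/k! · k a e^{k a}`, and summing
that over `k` gives `a b e^a e^{b e^a}`; the interchange is justified by absolute convergence, which
follows from the same computation with `|a|, |b|`. With `a = μ`, `b = λ t e^{-μ}` all exponentials
cancel and the mean is `λ μ t`.
-/

open Nat Real

theorem hasSum_mul_pow_div_factorial (x : ℝ) :
    HasSum (fun k : ℕ => k * x ^ k / k !) (x * exp x) := by
  rw [← hasSum_nat_add_iff' 1, Finset.sum_range_one, cast_zero, zero_mul, zero_div, sub_zero]
  refine (exp_eq_exp_ℝ ▸ NormedSpace.expSeries_div_hasSum_exp x).mul_left x |>.congr_fun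
    fun k => ?_
  rw [factorial_succ, cast_mul, cast_succ]
  field_simp
  ring

theorem hasSum_mul_pow_div_factorial_mul_pow_div_factorial (a b : ℝ) (k : ℕ) :
    HasSum (fun m : ℕ => m * a ^ m / m ! * (k ^ m * b ^ k / k !))
      (a * (k * (b * exp a) ^ k / k !)) := by
  have h := (hasSum_mul_pow_div_factorial (k * a)).mul_left (b ^ k / k !)
  rw [exp_nat_mul] at h
  rw [show a * (k * (b * exp a) ^ k / k !) = b ^ k / k ! * (k * a * exp a ^ k) by ring]
  exact h.congr_fun fun m => by ring

theorem summable_uncurry_mul_pow_div_factorial_mul_pow_div_factorial (a b : ℝ) :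
    Summable (Function.uncurry fun m k : ℕ => (m * a ^ m / m ! * (k ^ m * b ^ k / k !) : ℝ)) := by
  refine Summable.of_abs ?_
  have habs : ∀ p : ℕ × ℕ, |Function.uncurry (fun m k : ℕ =>
      (m * a ^ m / m ! * (k ^ m * b ^ k / k !) : ℝ)) p| =
      p.1 * |a| ^ p.1 / p.1 ! * (p.2 ^ p.1 * |b| ^ p.2 / p.2 !) := by
    rintro ⟨m, k⟩
    simp [abs_mul, abs_div, abs_pow]
  simp only [habs]
  refine Summable.prod_symm (f := fun p : ℕ × ℕ =>
    (p.2 * |a| ^ p.2 / p.2 ! * (p.1 ^ p.2 * |b| ^ p.1 / p.1 !) : ℝ)) ?_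
  refine (summable_prod_of_nonneg fun p => by positivity).2 ⟨fun k => ?_, ?_⟩
  · exact (hasSum_mul_pow_div_factorial_mul_pow_div_factorial |a| |b| k).summable
  · simp only [fun k => (hasSum_mul_pow_div_factorial_mul_pow_div_factorial |a| |b| k).tsum_eq]
    exact (hasSum_mul_pow_div_factorial _).summable.mul_left _

theorem tsum_mul_pow_div_factorial_mul_tsum (a b : ℝ) :
    ∑' m : ℕ, m * a ^ m / m ! * ∑' k : ℕ, k ^ m * b ^ k / k ! =
      a * (b * exp a) * exp (b * exp a) := by
  calc ∑' m : ℕ, m * a ^ m / m ! * ∑' k : ℕ, k ^ m * b ^ k / k !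
      = ∑' (m : ℕ) (k : ℕ), m * a ^ m / m ! * (k ^ m * b ^ k / k !) := by
        simp only [tsum_mul_left]
    _ = ∑' (k : ℕ) (m : ℕ), m * a ^ m / m ! * (k ^ m * b ^ k / k !) :=
        (summable_uncurry_mul_pow_div_factorial_mul_pow_div_factorial a b).tsum_comm.symm
    _ = ∑' k : ℕ, a * (k * (b * exp a) ^ k / k !) :=
        tsum_congr fun k => (hasSum_mul_pow_div_factorial_mul_pow_div_factorial a b k).tsum_eq
    _ = a * (b * exp a) * exp (b * exp a) := by
        rw [tsum_mul_left, (hasSum_mul_pow_div_factorial _).tsum_eq]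
        ring

theorem tsum_mul_pow_div_factorial_mul_bell (a b : ℝ) :
    ∑' m : ℕ, m * (a ^ m / m !) * bell m b = a * (b * exp a) * exp (b * (exp a - 1)) := by
  have hbell : ∀ m : ℕ, m * (a ^ m / m !) * bell m b =
      exp (-b) * (m * a ^ m / m ! * ∑' k : ℕ, k ^ m * b ^ k / k !) := fun m => by
    rw [bell]
    ring
  rw [tsum_congr hbell, tsum_mul_left, tsum_mul_pow_div_factorial_mul_tsum,
    show b * (exp a - 1) = b * exp a + -b by ring, exp_add]
  ring

theorem stmt11_general (lam mu t : ℝ) :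
    ∑' n : ℕ, (n : ℝ) * iterP lam mu t n = lam * mu * t := by
  set A := lam * t * exp (-mu) with hA_def
  have hA : A * exp mu = lam * t := by
    rw [mul_assoc, ← exp_add, neg_add_cancel, exp_zero, mul_one]
  calc ∑' n : ℕ, (n : ℝ) * iterP lam mu t n
      = exp (-lam * t * (1 - exp (-mu))) * ∑' n : ℕ, n * (mu ^ n / n !) * bell n A := by
        rw [← tsum_mul_left]
        exact tsum_congr fun n => by rw [iterP]; ring
    _ = lam * mu * t := by
        have hcancel : -lam * t * (1 - exp (-mu)) + A * (exp mu - 1) = 0 := by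
          linear_combination hA - hA_def
        rw [tsum_mul_pow_div_factorial_mul_bell, hA, mul_left_comm, ← exp_add, hcancel,
          exp_zero]
        ring

/-- mean of the iterated Poisson process: `Σ_n n p_n(t) = λμt`. -/
theorem stmt11 (lam mu t : ℝ) (hlam : 0 < lam) (hmu : 0 < mu) (ht : 0 < t) :
    ∑' n : ℕ, (n : ℝ) * iterP lam mu t n = lam * mu * t :=
  stmt11_general lam mu t
end

section
/- For all λ > 0, μ > 0 and t > 0, the variance of the iterated Poisson process equals Σ_{n=0}^∞ (n - λμt)^2 · p_n(t) = λ μ (1 + μ) t; consequently the dispersion index (variance divided by mean) equals 1 + μ, which exceeds 1 and is independent of t. -/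
open scoped BigOperators
open Filter MeasureTheory

private lemma tsum_exp_aux (y : ℝ) :
    ∑' k : ℕ, y ^ k / (Nat.factorial k : ℝ) = Real.exp y := by
  rw [Real.exp_eq_exp_ℝ, NormedSpace.exp_eq_tsum_div]

private lemma shift1 (y : ℝ) (k : ℕ) :
    ((k + 1 : ℕ) : ℝ) * y ^ (k + 1) / (Nat.factorial (k + 1) : ℝ)
      = y * (y ^ k / (Nat.factorial k : ℝ)) := by
  have hf : ((Nat.factorial k : ℕ) : ℝ) ≠ 0 := by
    exact_mod_cast (Nat.factorial_pos k).ne'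
  have hk : ((k : ℝ) + 1) ≠ 0 := by positivity
  rw [Nat.factorial_succ]
  push_cast
  field_simp
  ring

private lemma summable1 (y : ℝ) :
    Summable fun k : ℕ => (k : ℝ) * y ^ k / (Nat.factorial k : ℝ) := by
  rw [← summable_nat_add_iff 1]
  exact ((Real.summable_pow_div_factorial y).mul_left y).congr fun k => (shift1 y k).symm

private lemma tsum1 (y : ℝ) :
    ∑' k : ℕ, (k : ℝ) * y ^ k / (Nat.factorial k : ℝ) = y * Real.exp y := by
  rw [Summable.tsum_eq_zero_add (summable1 y)]
  simp only [shift1 y]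
  rw [tsum_mul_left, tsum_exp_aux]
  simp

private lemma shift2 (y : ℝ) (k : ℕ) :
    ((k + 1 : ℕ) : ℝ) ^ 2 * y ^ (k + 1) / (Nat.factorial (k + 1) : ℝ)
      = y * ((k : ℝ) * y ^ k / (Nat.factorial k : ℝ))
        + y * (y ^ k / (Nat.factorial k : ℝ)) := by
  have hf : ((Nat.factorial k : ℕ) : ℝ) ≠ 0 := by
    exact_mod_cast (Nat.factorial_pos k).ne'
  have hk : ((k : ℝ) + 1) ≠ 0 := by positivity
  rw [Nat.factorial_succ]
  push_cast
  field_simp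
  ring

private lemma summable2 (y : ℝ) :
    Summable fun k : ℕ => (k : ℝ) ^ 2 * y ^ k / (Nat.factorial k : ℝ) := by
  rw [← summable_nat_add_iff 1]
  exact (((summable1 y).mul_left y).add
    ((Real.summable_pow_div_factorial y).mul_left y)).congr fun k => (shift2 y k).symm

private lemma tsum2 (y : ℝ) :
    ∑' k : ℕ, (k : ℝ) ^ 2 * y ^ k / (Nat.factorial k : ℝ) = (y + y ^ 2) * Real.exp y := by
  rw [Summable.tsum_eq_zero_add (summable2 y)]
  simp only [shift2 y]
  rw [Summable.tsum_add ((summable1 y).mul_left y) ((Real.summable_pow_div_factorial y).mul_left y),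
    tsum_mul_left, tsum_mul_left, tsum1, tsum_exp_aux]
  simp
  ring

private lemma quad_eq (a b c y : ℝ) :
    (fun k : ℕ => (a * (k : ℝ) ^ 2 + b * (k : ℝ) + c) * y ^ k / (Nat.factorial k : ℝ))
      = fun k : ℕ => a * ((k : ℝ) ^ 2 * y ^ k / (Nat.factorial k : ℝ))
        + (b * ((k : ℝ) * y ^ k / (Nat.factorial k : ℝ))
          + c * (y ^ k / (Nat.factorial k : ℝ))) := by
  funext k; ring

private lemma summableQ (a b c y : ℝ) :
    Summable fun k : ℕ =>
      (a * (k : ℝ) ^ 2 + b * (k : ℝ) + c) * y ^ k / (Nat.factorial k : ℝ) := by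
  rw [quad_eq]
  exact ((summable2 y).mul_left a).add (((summable1 y).mul_left b).add
    ((Real.summable_pow_div_factorial y).mul_left c))

private lemma tsumQ (a b c y : ℝ) :
    ∑' k : ℕ, (a * (k : ℝ) ^ 2 + b * (k : ℝ) + c) * y ^ k / (Nat.factorial k : ℝ)
      = (a * (y + y ^ 2) + b * y + c) * Real.exp y := by
  rw [quad_eq, Summable.tsum_add ((summable2 y).mul_left a) (((summable1 y).mul_left b).add
      ((Real.summable_pow_div_factorial y).mul_left c)),
    Summable.tsum_add ((summable1 y).mul_left b) ((Real.summable_pow_div_factorial y).mul_left c),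
    tsum_mul_left, tsum_mul_left, tsum_mul_left, tsum2, tsum1, tsum_exp_aux]
  ring

private lemma summable_powmul (n : ℕ) {x : ℝ} (hx : 0 ≤ x) :
    Summable fun k : ℕ => (k : ℝ) ^ n * x ^ k / (Nat.factorial k : ℝ) := by
  refine Summable.of_nonneg_of_le (fun k => by positivity) (fun k => ?_)
    ((Real.summable_pow_div_factorial (Real.exp 1 * x)).mul_left (Nat.factorial n : ℝ))
  have h1 : (k : ℝ) ^ n ≤ (Nat.factorial n : ℝ) * Real.exp k := by
    have h := Real.pow_div_factorial_le_exp (k:ℝ) (Nat.cast_nonneg k) n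
    rw [div_le_iff₀ (by positivity : (0:ℝ) < (Nat.factorial n : ℝ))] at h
    linarith
  calc (k : ℝ) ^ n * x ^ k / (Nat.factorial k : ℝ)
      ≤ ((Nat.factorial n : ℝ) * Real.exp k) * x ^ k / (Nat.factorial k : ℝ) := by
        gcongr
    _ = (Nat.factorial n : ℝ) * ((Real.exp 1 * x) ^ k / (Nat.factorial k : ℝ)) := by
        rw [mul_pow, Real.exp_one_pow]
        ring

/-- variance of the iterated Poisson process:
`Σ_n (n - λμt)^2 p_n(t) = λμ(1+μ)t`; the dispersion index equals `1+μ > 1`,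
independent of `t`. -/
theorem stmt12 (lam mu t : ℝ) (hlam : 0 < lam) (hmu : 0 < mu) (ht : 0 < t) :
    (∑' n : ℕ, ((n : ℝ) - lam * mu * t) ^ 2 * iterP lam mu t n = lam * mu * (1 + mu) * t) ∧
    (lam * mu * (1 + mu) * t) / (lam * mu * t) = 1 + mu ∧
    1 < 1 + mu := by
  refine ⟨?_, ?_, by linarith⟩
  · have hx : (0:ℝ) ≤ lam * t * Real.exp (-mu) := by positivity
    set x := lam * t * Real.exp (-mu) with hxdef
    set c := lam * mu * t with hcdef
    set F : ℕ → ℕ → ℝ := fun n k =>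
      (((n : ℝ) - c) ^ 2 * (mu ^ n / (Nat.factorial n : ℝ)))
        * ((k : ℝ) ^ n * x ^ k / (Nat.factorial k : ℝ)) with hF
    set C : ℝ := Real.exp (-lam * t * (1 - Real.exp (-mu))) * Real.exp (-x) with hC
    have hterm : ∀ n : ℕ, ((n : ℝ) - c) ^ 2 * iterP lam mu t n = C * ∑' k : ℕ, F n k := by
      intro n
      simp only [hF, hC, iterP, bell, ← hxdef]
      rw [tsum_mul_left]
      ring
    have hswapn : ∀ k : ℕ, (fun n : ℕ => F n k)
        = fun n : ℕ => (x ^ k / (Nat.factorial k : ℝ))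
          * ((1 * (n : ℝ) ^ 2 + (-2 * c) * (n : ℝ) + c ^ 2) * ((k : ℝ) * mu) ^ n
            / (Nat.factorial n : ℝ)) := by
      intro k; funext n; simp only [hF]; ring
    have hsum_k : ∀ n : ℕ, Summable fun k : ℕ => F n k := by
      intro n
      simp only [hF]
      exact (summable_powmul n hx).mul_left _
    have hsum_n : ∀ k : ℕ, Summable fun n : ℕ => F n k := by
      intro k
      rw [hswapn k]
      exact (summableQ 1 (-2 * c) (c ^ 2) ((k : ℝ) * mu)).mul_left _
    have hz : lam * t = x * Real.exp mu := by
      rw [hxdef, mul_assoc, ← Real.exp_add]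
      simp
    have htsum_n : ∀ k : ℕ, ∑' n : ℕ, F n k
        = (mu ^ 2 * (k : ℝ) ^ 2 + ((1 - 2 * c) * mu) * (k : ℝ) + c ^ 2)
          * (lam * t) ^ k / (Nat.factorial k : ℝ) := by
      intro k
      rw [hswapn k, tsum_mul_left, tsumQ, hz,
        Real.exp_nat_mul mu k, mul_pow]
      ring
    have hsum_tsum : Summable fun k : ℕ => ∑' n : ℕ, F n k :=
      (summableQ (mu ^ 2) ((1 - 2 * c) * mu) (c ^ 2) (lam * t)).congr
        fun k => (htsum_n k).symm
    have hnonneg : ∀ p : ℕ × ℕ, 0 ≤ F p.2 p.1 := by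
      intro p
      simp only [hF]
      have h1 : (0:ℝ) ≤ ((p.2 : ℝ) - c) ^ 2 := sq_nonneg _
      have h2 : (0:ℝ) ≤ mu ^ p.2 / (Nat.factorial p.2 : ℝ) := by positivity
      have h3 : (0:ℝ) ≤ (p.1 : ℝ) ^ p.2 * x ^ p.1 / (Nat.factorial p.1 : ℝ) := by positivity
      exact mul_nonneg (mul_nonneg h1 h2) h3
    have hprod : Summable fun p : ℕ × ℕ => F p.2 p.1 := by
      rw [summable_prod_of_nonneg hnonneg]
      exact ⟨hsum_n, hsum_tsum⟩
    have hunc : Summable (Function.uncurry F) := hprod.prod_symm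
    calc ∑' n : ℕ, ((n : ℝ) - c) ^ 2 * iterP lam mu t n
        = ∑' n : ℕ, C * ∑' k : ℕ, F n k := tsum_congr hterm
      _ = C * ∑' (n : ℕ) (k : ℕ), F n k := tsum_mul_left
      _ = C * ∑' (k : ℕ) (n : ℕ), F n k := by
          rw [Summable.tsum_comm' hunc hsum_k hsum_n]
      _ = C * ∑' k : ℕ, (mu ^ 2 * (k : ℝ) ^ 2 + ((1 - 2 * c) * mu) * (k : ℝ) + c ^ 2)
            * (lam * t) ^ k / (Nat.factorial k : ℝ) := by
          rw [tsum_congr htsum_n]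
      _ = C * ((mu ^ 2 * ((lam * t) + (lam * t) ^ 2) + ((1 - 2 * c) * mu) * (lam * t) + c ^ 2)
            * Real.exp (lam * t)) := by rw [tsumQ]
      _ = lam * mu * (1 + mu) * t := by
          have h1 : C * Real.exp (lam * t) = 1 := by
            rw [hC, ← Real.exp_add, ← Real.exp_add, hxdef]
            rw [show -lam * t * (1 - Real.exp (-mu)) + -(lam * t * Real.exp (-mu)) + lam * t
              = 0 by ring, Real.exp_zero]
          have h2 : (mu ^ 2 * ((lam * t) + (lam * t) ^ 2)
              + ((1 - 2 * c) * mu) * (lam * t) + c ^ 2) = lam * mu * (1 + mu) * t := by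
            rw [hcdef]; ring
          calc C * ((mu ^ 2 * ((lam * t) + (lam * t) ^ 2)
                + ((1 - 2 * c) * mu) * (lam * t) + c ^ 2) * Real.exp (lam * t))
              = (mu ^ 2 * ((lam * t) + (lam * t) ^ 2)
                + ((1 - 2 * c) * mu) * (lam * t) + c ^ 2) * (C * Real.exp (lam * t)) := by ring
            _ = lam * mu * (1 + mu) * t := by rw [h1, h2, mul_one]
  · have hne : lam * mu * t ≠ 0 := by positivity
    field_simp
end

section
/- For all λ > 0, μ > 0 and every integer n ≥ 1, the mean sojourn time of the iterated Poisson process in state n is finite and equals ∫_0^∞ p_n(t) dt = (1/λ) (μ^n/n!) Σ_{k=1}^∞ k^n e^{-μ k} < ∞. -/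
/-!
Expanding the Bell series, the two exponential factors of `p_n(t)` combine to `e^{-λt}`, so
`p_n(t) = (μ^n/n!) Σ_k k^n (λe^{-μ})^k / k! · t^k e^{-λt}`, a series of nonnegative functions.
Integrating termwise with `∫_0^∞ t^k e^{-λt} dt = k!/λ^{k+1}` turns the `k`-th term into
`(1/λ)(μ^n/n!) k^n e^{-μk}`, which is summable; the `k = 0` term vanishes because `n ≥ 1`.
-/

open scoped BigOperators
open Filter MeasureTheory

open Set Real
open scoped Nat ENNReal

namespace MeasureTheory

variable {α E : Type*} [MeasurableSpace α] {μ : Measure α}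
  [NormedAddCommGroup E] [CompleteSpace E]

theorem integrable_tsum_of_summable_integral_norm {ι : Type*} [Countable ι] {F : ι → α → E}
    (hF_int : ∀ i, Integrable (F i) μ) (hF_sum : Summable fun i ↦ ∫ a, ‖F i a‖ ∂μ) :
    Integrable (fun a ↦ ∑' i, F i a) μ := by
  set f : ι → α →₁[μ] E := fun i ↦ (hF_int i).toL1 (F i)
  have hf : ∑' i, ‖f i‖ₑ ≠ ∞ := by
    refine tsum_enorm_ne_top_iff_summable_norm.2 (hF_sum.congr fun i ↦ ?_)
    exact (L1.norm_of_fun_eq_integral_norm (hF_int i)).symm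
  have hf_ae : ∀ᵐ a ∂μ, ∀ i, f i a = F i a := ae_all_iff.2 fun i ↦ (hF_int i).coeFn_toL1
  refine (L1.integrable_coeFn (∑' i, f i)).congr ?_
  filter_upwards [Lp.coeFn_tsum hf, hf_ae] with a ha hfa
  rw [ha]
  exact tsum_congr hfa

end MeasureTheory

theorem integrableOn_pow_mul_exp_neg_mul_Ioi (k : ℕ) {r : ℝ} (hr : 0 < r) :
    IntegrableOn (fun t : ℝ ↦ t ^ k * exp (-(r * t))) (Ioi 0) := by
  refine (integrableOn_rpow_mul_exp_neg_mul_rpow (s := k) (neg_one_lt_zero.trans_le k.cast_nonneg)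
    one_pos hr).congr_fun (fun t _ ↦ ?_) measurableSet_Ioi
  simp [rpow_natCast]

theorem integral_pow_mul_exp_neg_mul_Ioi (k : ℕ) {r : ℝ} (hr : 0 < r) :
    ∫ t in Ioi (0 : ℝ), t ^ k * exp (-(r * t)) = k ! / r ^ (k + 1) := by
  have h := integral_rpow_mul_exp_neg_mul_Ioi (a := k + 1) (by positivity) hr
  rw [add_sub_cancel_right, Gamma_nat_eq_factorial, ← Nat.cast_succ] at h
  simp_rw [rpow_natCast] at h
  rw [h, one_div_pow, one_div_mul_eq_div]

section IteratedPoisson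

variable (lam mu : ℝ) (n : ℕ)

noncomputable def iterPTerm (k : ℕ) (t : ℝ) : ℝ :=
  mu ^ n / n ! * k ^ n * (lam * exp (-mu)) ^ k / k ! * (t ^ k * exp (-(lam * t)))

theorem iterP_eq_tsum_iterPTerm (t : ℝ) : iterP lam mu t n = ∑' k, iterPTerm lam mu n k t := by
  have hexp : exp (-lam * t * (1 - exp (-mu))) * exp (-(lam * t * exp (-mu))) =
      exp (-(lam * t)) := by
    rw [← exp_add]; ring_nf
  have hterm (k : ℕ) : iterPTerm lam mu n k t =
      mu ^ n / n ! * exp (-(lam * t)) * (k ^ n * (lam * t * exp (-mu)) ^ k / k !) := by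
    rw [iterPTerm, mul_pow, mul_pow, mul_pow]; ring
  rw [tsum_congr hterm, tsum_mul_left, iterP, bell, ← hexp]
  ring

variable {lam mu}

theorem integrableOn_iterPTerm (hlam : 0 < lam) (k : ℕ) :
    IntegrableOn (iterPTerm lam mu n k) (Ioi 0) :=
  (integrableOn_pow_mul_exp_neg_mul_Ioi k hlam).const_mul _

theorem integral_iterPTerm (hlam : 0 < lam) (k : ℕ) :
    ∫ t in Ioi 0, iterPTerm lam mu n k t =
      1 / lam * (mu ^ n / n !) * (k ^ n * exp (-mu * k)) := by
  unfold iterPTerm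
  rw [integral_const_mul, integral_pow_mul_exp_neg_mul_Ioi k hlam, mul_comm (-mu),
    exp_nat_mul]
  field_simp
  ring

theorem integral_norm_iterPTerm (hlam : 0 ≤ lam) (hmu : 0 ≤ mu) (k : ℕ) :
    ∫ t in Ioi 0, ‖iterPTerm lam mu n k t‖ = ∫ t in Ioi 0, iterPTerm lam mu n k t := by
  refine setIntegral_congr_fun measurableSet_Ioi fun t ht ↦ norm_of_nonneg ?_
  have : (0 : ℝ) < t := ht
  unfold iterPTerm
  positivity

end IteratedPoisson

/-- the mean sojourn time in state `n ≥ 1` is finite and equals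
`∫_0^∞ p_n(t) dt = (1/λ)(μ^n/n!) Σ_{k=1}^∞ k^n e^{-μk} < ∞`. -/
theorem stmt13 (lam mu : ℝ) (hlam : 0 < lam) (hmu : 0 < mu) (n : ℕ) (hn : 1 ≤ n) :
    MeasureTheory.IntegrableOn (fun t => iterP lam mu t n) (Set.Ioi (0 : ℝ)) ∧
    Summable (fun k : ℕ => ((k : ℝ) + 1) ^ n * Real.exp (-mu * ((k : ℝ) + 1))) ∧
    ∫ t in Set.Ioi (0 : ℝ), iterP lam mu t n
      = (1 / lam) * (mu ^ n / (Nat.factorial n : ℝ)) *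
          ∑' k : ℕ, ((k : ℝ) + 1) ^ n * Real.exp (-mu * ((k : ℝ) + 1)) := by
  have hsum := summable_pow_mul_exp_neg_nat_mul n hmu
  have hF_int := integrableOn_iterPTerm (mu := mu) n hlam
  have hF_sum : Summable fun k ↦ ∫ t in Ioi 0, ‖iterPTerm lam mu n k t‖ := by
    simp_rw [integral_norm_iterPTerm n hlam.le hmu.le, integral_iterPTerm n hlam]
    exact hsum.mul_left _
  have hiterP : (fun t ↦ iterP lam mu t n) = fun t ↦ ∑' k, iterPTerm lam mu n k t :=
    funext (iterP_eq_tsum_iterPTerm lam mu n)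
  refine ⟨?_, by simpa using (summable_nat_add_iff 1).2 hsum, ?_⟩
  · rw [hiterP]
    exact integrable_tsum_of_summable_integral_norm hF_int hF_sum
  · rw [hiterP, ← integral_tsum_of_summable_integral_norm hF_int hF_sum]
    simp_rw [integral_iterPTerm n hlam]
    rw [tsum_mul_left, hsum.tsum_eq_zero_add]
    simp [zero_pow (Nat.one_le_iff_ne_zero.mp hn)]
end

section
/- Fix λ > 0 and μ > 0, and let P_n(t) = Σ_{j=0}^n p_j(t). For the first-crossing time T of the iterated Poisson process through the constant boundary k, whose survival function is P(T > t) = P_{k-1}(t), the first-crossing density ψ(t) = -d/dt P_{k-1}(t) satisfies: for k = 1, ψ(t) = λ(1-e^{-μ}) e^{-λ(1-e^{-μ})t} (i.e., T is exponential with parameter λ(1-e^{-μ})); and for every integer k ≥ 2 and t > 0, ψ(t) = p_0(t) λ(1-e^{-μ}) [1 + Σ_{i=1}^{k-1} (λ e^{-μ} t)^i C(i; k-1)] - p_0(t) λ e^{-μ} Σ_{i=1}^{k-1} i (λ e^{-μ} t)^{i-1} C(i; k-1), where C(i; k-1) := Σ_{j=i}^{k-1} S_2(j,i) μ^j/j!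 and p_0(t) = e^{-λt(1-e^{-μ})}. -/
open scoped BigOperators
open Filter MeasureTheory

/-- Stirling numbers of the second kind:
`S2 n k = (1/k!) Σ_{i=0}^k (-1)^i C(k,i) (k-i)^n`. -/
noncomputable def S2 (n k : ℕ) : ℝ :=
  (1 / (Nat.factorial k : ℝ)) * ∑ i ∈ Finset.range (k + 1),
    (-1 : ℝ) ^ i * (Nat.choose k i : ℝ) * ((k - i : ℕ) : ℝ) ^ n

/-!
The Bell polynomial is the Touchard polynomial, `B_n(x) = Σ_i S₂(n,i) x^i`: Newton's
forward-difference formula for `x ↦ x^n` gives `k^n = Σ_i S₂(n,i) k(k-1)⋯(k-i+1)`, and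
`Σ_k k(k-1)⋯(k-i+1) x^k/k! = x^i e^x`. Summing the resulting expressions for `p_j(t)` over
`j ≤ n` and collecting powers of `t` gives `P_n(t) = p_0(t) Σ_{i ≤ n} C(i; n) (λ e^{-μ} t)^i`
with `C(0; n) = 1`, and the density is the product-rule derivative of this.
-/

open Finset Real
open scoped Nat

lemma factorial_mul_S2_eq_fwdDiff_iter (n i : ℕ) :
    (i ! : ℝ) * S2 n i = (fwdDiff (1 : ℝ))^[i] (fun r : ℝ => r ^ n) 0 := by
  rw [fwdDiff_iter_eq_sum_shift, S2, ← mul_assoc, mul_one_div_cancel (by positivity), one_mul,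
    ← sum_range_reflect]
  refine sum_congr rfl fun j hj => ?_
  have hj : j ≤ i := Nat.lt_succ_iff.mp (mem_range.mp hj)
  rw [Nat.add_sub_cancel, Nat.choose_symm hj, Nat.sub_sub_self hj]
  simp

lemma cast_pow_eq_sum_S2_mul_descFactorial (n k : ℕ) :
    (k : ℝ) ^ n = ∑ i ∈ range (n + 1), S2 n i * k.descFactorial i := by
  set g : ℕ → ℝ := fun i => k.choose i * (fwdDiff (1 : ℝ))^[i] (fun r : ℝ => r ^ n) 0 with hg
  have newton : (k : ℝ) ^ n = ∑ i ∈ range (k + 1), g i := by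
    simpa using shift_eq_sum_fwdDiff_iter (1 : ℝ) (fun r : ℝ => r ^ n) k 0
  have hS2 (i : ℕ) : S2 n i * k.descFactorial i = g i := by
    simp only [hg]
    rw [← factorial_mul_S2_eq_fwdDiff_iter, Nat.descFactorial_eq_factorial_mul_choose]
    push_cast
    ring
  have hg_eq_zero (i : ℕ) (hi : min n k < i) : g i = 0 := by
    rcases min_lt_iff.mp hi with hi | hi
    · simp [hg, fwdDiff_iter_pow_eq_zero_of_lt hi]
    · simp [hg, Nat.choose_eq_zero_of_lt hi]
  have hrange (m : ℕ) (hm : min n k ≤ m ∧ m ≤ max n k) :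
      ∑ i ∈ range (m + 1), g i = ∑ i ∈ range (max n k + 1), g i :=
    sum_subset (range_subset_range.mpr (by omega)) fun i hi hi' => hg_eq_zero i (by
      simp only [mem_range] at hi hi'
      omega)
  simp only [hS2, newton, hrange n (by omega), hrange k (by omega)]

lemma hasSum_descFactorial_mul_pow_div_factorial (i : ℕ) (x : ℝ) :
    HasSum (fun k : ℕ => (k.descFactorial i : ℝ) * x ^ k / k !) (x ^ i * exp x) := by
  have hshift (m : ℕ) : ((m + i).descFactorial i : ℝ) * x ^ (m + i) / (m + i)! =
      x ^ i * (x ^ m / m !) := by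
    have h := Nat.factorial_mul_descFactorial (Nat.le_add_left i m)
    rw [Nat.add_sub_cancel] at h
    rw [← h, pow_add]
    push_cast
    have hfact : (m ! : ℝ) ≠ 0 := by positivity
    have hdesc : ((m + i).descFactorial i : ℝ) ≠ 0 := by
      exact_mod_cast (Nat.descFactorial_pos.mpr (Nat.le_add_left i m)).ne'
    field_simp
  have hinit : ∑ k ∈ range i, (k.descFactorial i : ℝ) * x ^ k / k ! = 0 :=
    sum_eq_zero fun k hk => by
      rw [Nat.descFactorial_eq_zero_iff_lt.mpr (mem_range.mp hk)]; simp
  have htail : HasSum (fun m : ℕ => ((m + i).descFactorial i : ℝ) * x ^ (m + i) / (m + i)!)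
      (x ^ i * exp x) := by
    have hexp : HasSum (fun m : ℕ => x ^ m / m !) (exp x) := by
      rw [Real.exp_eq_exp_ℝ]
      exact NormedSpace.expSeries_div_hasSum_exp x
    rw [funext hshift]
    exact hexp.mul_left (x ^ i)
  simpa only [hinit, add_zero] using
    (hasSum_nat_add_iff (f := fun k : ℕ => (k.descFactorial i : ℝ) * x ^ k / k !) i).mp htail

theorem bell_eq_sum_S2_mul_pow (n : ℕ) (x : ℝ) :
    bell n x = ∑ i ∈ range (n + 1), S2 n i * x ^ i := by
  have hsum : HasSum (fun k : ℕ => (k : ℝ) ^ n * x ^ k / k !)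
      (∑ i ∈ range (n + 1), S2 n i * (x ^ i * exp x)) := by
    have hterm (k : ℕ) : (k : ℝ) ^ n * x ^ k / k ! =
        ∑ i ∈ range (n + 1), S2 n i * (k.descFactorial i * x ^ k / k !) := by
      rw [cast_pow_eq_sum_S2_mul_descFactorial, sum_mul, sum_div]
      exact sum_congr rfl fun i _ => by ring
    rw [funext hterm]
    exact hasSum_sum fun i _ =>
      (hasSum_descFactorial_mul_pow_div_factorial i x).mul_left (S2 n i)
  rw [bell, hsum.tsum_eq, mul_sum]
  refine sum_congr rfl fun i _ => ?_
  have hexp : exp (-x) * exp x = 1 := by rw [← exp_add, neg_add_cancel, exp_zero]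
  linear_combination S2 n i * x ^ i * hexp

lemma S2_zero_right (n : ℕ) : S2 n 0 = 0 ^ n := by
  simp [S2]

/-- The paper's `C(i; k - 1)`, with `n = k - 1`. -/
noncomputable def crossingCoeff (mu : ℝ) (n i : ℕ) : ℝ :=
  ∑ j ∈ Icc i n, S2 j i * mu ^ j / j !

lemma crossingCoeff_zero_right (mu : ℝ) (n : ℕ) : crossingCoeff mu n 0 = 1 := by
  rw [crossingCoeff, sum_eq_single_of_mem 0 (by simp)]
  · simp [S2_zero_right]
  · intro j _ hj
    simp [S2_zero_right, hj]

lemma sum_range_iterP (lam mu t : ℝ) (n : ℕ) :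
    ∑ j ∈ range (n + 1), iterP lam mu t j =
      exp (-(lam * (1 - exp (-mu))) * t) *
        ∑ i ∈ range (n + 1), (lam * exp (-mu) * t) ^ i * crossingCoeff mu n i := by
  have hp (j : ℕ) : iterP lam mu t j = exp (-(lam * (1 - exp (-mu))) * t) *
      ∑ i ∈ range (j + 1), (lam * exp (-mu) * t) ^ i * (S2 j i * mu ^ j / j !) := by
    rw [iterP, bell_eq_sum_S2_mul_pow, mul_sum, mul_sum]
    refine sum_congr rfl fun i _ => ?_
    ring_nf
  simp_rw [hp, crossingCoeff, mul_sum]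
  refine sum_comm' fun j i => ?_
  simp only [mem_range, mem_Icc]
  omega

lemma hasDerivAt_exp_mul_sum_pow (a b t : ℝ) (c : ℕ → ℝ) (s : Finset ℕ) :
    HasDerivAt (fun u => exp (-a * u) * ∑ i ∈ s, (b * u) ^ i * c i)
      (exp (-a * t) * (-a * ∑ i ∈ s, (b * t) ^ i * c i +
        b * ∑ i ∈ s, i * (b * t) ^ (i - 1) * c i)) t := by
  have hexp : HasDerivAt (fun u => exp (-a * u)) (exp (-a * t) * -a) t := by
    simpa using ((hasDerivAt_id t).const_mul (-a)).exp
  have hpoly : HasDerivAt (fun u => ∑ i ∈ s, (b * u) ^ i * c i)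
      (∑ i ∈ s, i * (b * t) ^ (i - 1) * b * c i) t :=
    HasDerivAt.fun_sum fun i _ =>
      ((hasDerivAt_pow i (b * t)).comp t (by simpa using (hasDerivAt_id t).const_mul b)).mul_const _
  refine (hexp.mul hpoly).congr_deriv ?_
  have hpoly' : ∑ i ∈ s, i * (b * t) ^ (i - 1) * b * c i =
      b * ∑ i ∈ s, i * (b * t) ^ (i - 1) * c i := by
    rw [mul_sum]
    exact sum_congr rfl fun i _ => by ring
  rw [hpoly']
  ring

lemma sum_range_succ_eq_add_sum_Icc {M : Type*} [AddCommMonoid M] (f : ℕ → M) (n : ℕ) :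
    ∑ i ∈ range (n + 1), f i = f 0 + ∑ i ∈ Icc 1 n, f i := by
  rw [Nat.range_succ_eq_Icc_zero, ← add_sum_Ioc_eq_sum_Icc (Nat.zero_le n),
    ← Icc_add_one_left_eq_Ioc, zero_add]

theorem stmt15_general (lam mu : ℝ) (k : ℕ) (t : ℝ) :
    (k = 1 →
      -deriv (fun u => ∑ j ∈ Finset.range k, iterP lam mu u j) t
        = lam * (1 - Real.exp (-mu)) * Real.exp (-(lam * (1 - Real.exp (-mu))) * t)) ∧
    (2 ≤ k →
      -deriv (fun u => ∑ j ∈ Finset.range k, iterP lam mu u j) t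
        = Real.exp (-lam * t * (1 - Real.exp (-mu))) * (lam * (1 - Real.exp (-mu))) *
            (1 + ∑ i ∈ Finset.Icc 1 (k - 1), (lam * Real.exp (-mu) * t) ^ i *
              (∑ j ∈ Finset.Icc i (k - 1), S2 j i * mu ^ j / (Nat.factorial j : ℝ)))
          - Real.exp (-lam * t * (1 - Real.exp (-mu))) * (lam * Real.exp (-mu)) *
            ∑ i ∈ Finset.Icc 1 (k - 1), (i : ℝ) * (lam * Real.exp (-mu) * t) ^ (i - 1) *
              (∑ j ∈ Finset.Icc i (k - 1), S2 j i * mu ^ j / (Nat.factorial j : ℝ))) := by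
  obtain _ | n := k
  · exact ⟨fun h => by omega, fun h => by omega⟩
  set a := lam * (1 - exp (-mu))
  set b := lam * exp (-mu)
  have hψ : -deriv (fun u => ∑ j ∈ range (n + 1), iterP lam mu u j) t =
      exp (-a * t) * (a * ∑ i ∈ range (n + 1), (b * t) ^ i * crossingCoeff mu n i -
        b * ∑ i ∈ range (n + 1), i * (b * t) ^ (i - 1) * crossingCoeff mu n i) := by
    have hP : (fun u => ∑ j ∈ range (n + 1), iterP lam mu u j) =
        fun u => exp (-a * u) * ∑ i ∈ range (n + 1), (b * u) ^ i * crossingCoeff mu n i :=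
      funext fun u => sum_range_iterP lam mu u n
    rw [hP, (hasDerivAt_exp_mul_sum_pow a b t _ _).deriv]
    ring
  have hexp : exp (-lam * t * (1 - exp (-mu))) = exp (-a * t) := by
    congr 1
    simp only [a]
    ring
  have hC (i : ℕ) : ∑ j ∈ Icc i n, S2 j i * mu ^ j / j ! = crossingCoeff mu n i := rfl
  simp only [Nat.add_sub_cancel, hC, hψ, hexp]
  refine ⟨fun h => ?_, fun _ => ?_⟩
  · obtain rfl : n = 0 := by omega
    rw [sum_range_one, sum_range_one, crossingCoeff_zero_right]
    ring
  · rw [sum_range_succ_eq_add_sum_Icc, sum_range_succ_eq_add_sum_Icc, crossingCoeff_zero_right]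
    ring

/-- first-crossing-time density of the iterated Poisson process through the
constant boundary `k`, i.e. `ψ(t) = -(d/dt) P_{k-1}(t)` where `P_{k-1}(t) = Σ_{j=0}^{k-1} p_j(t)`:
for `k = 1` it is exponential with parameter `λ(1-e^{-μ})`, and for `k ≥ 2` it equals the
closed-form expression involving `C(i;k-1) = Σ_{j=i}^{k-1} S2(j,i) μ^j/j!`. -/
theorem stmt15 (lam mu : ℝ) (hlam : 0 < lam) (hmu : 0 < mu)
    (k : ℕ) (hk : 1 ≤ k) (t : ℝ) (ht : 0 < t) :
    (k = 1 →
      -deriv (fun u => ∑ j ∈ Finset.range k, iterP lam mu u j) t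
        = lam * (1 - Real.exp (-mu)) * Real.exp (-(lam * (1 - Real.exp (-mu))) * t)) ∧
    (2 ≤ k →
      -deriv (fun u => ∑ j ∈ Finset.range k, iterP lam mu u j) t
        = Real.exp (-lam * t * (1 - Real.exp (-mu))) * (lam * (1 - Real.exp (-mu))) *
            (1 + ∑ i ∈ Finset.Icc 1 (k - 1), (lam * Real.exp (-mu) * t) ^ i *
              (∑ j ∈ Finset.Icc i (k - 1), S2 j i * mu ^ j / (Nat.factorial j : ℝ)))
          - Real.exp (-lam * t * (1 - Real.exp (-mu))) * (lam * Real.exp (-mu)) *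
            ∑ i ∈ Finset.Icc 1 (k - 1), (i : ℝ) * (lam * Real.exp (-mu) * t) ^ (i - 1) *
              (∑ j ∈ Finset.Icc i (k - 1), S2 j i * mu ^ j / (Nat.factorial j : ℝ))) :=
  stmt15_general lam mu k t
end
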